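/- Asynchronous incremental voting on K_n, elimination of an extreme opinion: let s = min_v X_v(0) and ℓ = max_v X_v(0) and suppose ℓ ≥ s+3. Then for every t ≥ 0, E[N_s(t+1)·N_ℓ(t+1) | X(t)] ≤ (1 − 1/n)·N_s(t)·N_ℓ(t), and consequently, for T = ⌈3n log n⌉, P[N_s(T)·N_ℓ(T) > 0] ≤ 1/n; that is, with probability at least 1 − 1/n one of the two extreme opinions has disappeared within ⌈3n log n⌉ steps. -/

import Mathlib

/-!
STATEMENT 14: Asynchronous incremental voting on `K_n`, elimination of an extreme
opinion.  Let `s = min_v X_v(0)` and `ℓ = max_v X_v(0)` with `ℓ ≥ s+3`.  Then for every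
`t ≥ 0`, `E[N_s(t+1)·N_ℓ(t+1) | X(t)] ≤ (1 − 1/n)·N_s(t)·N_ℓ(t)` and, for
`T = ⌈3 n log n⌉`, `P[N_s(T)·N_ℓ(T) > 0] ≤ 1/n`; that is, with probability at least
`1 − 1/n` one of the two extreme opinions has disappeared within `⌈3 n log n⌉` steps.

On `K_n` the asynchronous process is: a uniformly random vertex `v` is chosen, then a
second uniformly random vertex `w`, and `v` updates towards `w`'s opinion.  The one-step
conditional expectation bound is stated for every configuration whose opinions lie in
`[s, ℓ]` (which holds for every state of the process).
-/

namespace KnAsync14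

/-- The incremental voting update rule. -/
def updateRule (a b : ℤ) : ℤ := if a < b then a + 1 else if b < a then a - 1 else a

/-- Expected value of a real-valued function under a probability mass function. -/
noncomputable def expVal {α : Type*} (p : PMF α) (f : α → ℝ) : ℝ :=
  ∑' a, (p a).toReal * f a

/-- The probability of an event under a probability mass function, as a real number. -/
noncomputable def prob {α : Type*} (p : PMF α) (A : Set α) : ℝ :=
  (∑' a, A.indicator p a).toReal

/-- One step of asynchronous incremental voting on `K_n`: a uniformly random pair
`(v, w)` is chosen and vertex `v` updates using `w`'s opinion. -/
noncomputable def step (n : ℕ) [NeZero n] (x : Fin n → ℤ) : PMF (Fin n → ℤ) :=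
  (PMF.uniformOfFintype (Fin n × Fin n)).map
    fun p => Function.update x p.1 (updateRule (x p.1) (x p.2))

/-- The distribution of the configuration after `t` steps, started from `x0`. -/
noncomputable def dist (n : ℕ) [NeZero n] (x0 : Fin n → ℤ) : ℕ → PMF (Fin n → ℤ)
  | 0 => PMF.pure x0
  | t + 1 => (dist n x0 t).bind (step n)

/-- `count n i x` is `N_i`: the number of vertices holding opinion `i`. -/
def count (n : ℕ) (i : ℤ) (x : Fin n → ℤ) : ℕ :=
  (Finset.univ.filter fun v => x v = i).card

/-!
Write `a = N_s`, `b = N_ℓ`. A vote moves one opinion by at most one, and `ℓ - s ≥ 3`, so no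
vote changes both `a` and `b`; hence the change of `a b` is `a Δb + b Δa`. Opinion `ℓ` is
gained only when a vertex at `ℓ - 1` or `ℓ` samples `ℓ`, and lost whenever a vertex at `ℓ`
samples anything else, so `n² E[Δb] = b (N_{ℓ-1} + b - n)`, and symmetrically at `s`. As
`N_s + N_{s+1} + N_{ℓ-1} + N_ℓ ≤ n`, this gives `E[Δ(ab)] ≤ -ab/n`. Iterating,
`E[N_s(T) N_ℓ(T)] ≤ (1 - 1/n)^T n² ≤ n⁻¹` for `T = ⌈3 n log n⌉`, and Markov's inequality
concludes.
-/

open Finset Function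
open scoped ENNReal

section PMFExpectation

variable {α β : Type*}

theorem tsum_bind_mul (p : PMF α) (q : α → PMF β) (G : β → ℝ≥0∞) :
    ∑' y, p.bind q y * G y = ∑' x, p x * ∑' y, q x y * G y := by
  simp only [PMF.bind_apply, ← ENNReal.tsum_mul_right, ← ENNReal.tsum_mul_left, mul_assoc]
  exact ENNReal.tsum_comm

theorem tsum_map_mul (p : PMF α) (g : α → β) (G : β → ℝ≥0∞) :
    ∑' y, p.map g y * G y = ∑' x, p x * G (g x) := by
  classical
  rw [← PMF.bind_pure_comp, tsum_bind_mul]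
  refine tsum_congr fun x => congrArg (p x * ·) ?_
  rw [tsum_eq_single (g x) fun y hy => by simp [PMF.pure_apply, hy]]
  simp

theorem tsum_bind_mul_le {p : PMF α} {q : α → PMF β} {F : α → ℝ≥0∞} {G : β → ℝ≥0∞}
    {c : ℝ≥0∞} (h : ∀ x ∈ p.support, ∑' y, q x y * G y ≤ c * F x) :
    ∑' y, p.bind q y * G y ≤ c * ∑' x, p x * F x := by
  rw [tsum_bind_mul, ← ENNReal.tsum_mul_left]
  refine ENNReal.tsum_le_tsum fun x => ?_
  by_cases hx : x ∈ p.support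
  · calc p x * ∑' y, q x y * G y ≤ p x * (c * F x) := by gcongr; exact h x hx
      _ = c * (p x * F x) := mul_left_comm _ _ _
  · simp [(PMF.mem_support_iff p x).not_left.mp hx]

theorem prob_le_toReal_tsum_mul (p : PMF α) {A : Set α} {F : α → ℝ≥0∞}
    (hF : ∀ y ∈ A, 1 ≤ F y) (hfin : ∑' y, p y * F y ≠ ∞) :
    prob p A ≤ (∑' y, p y * F y).toReal := by
  refine ENNReal.toReal_mono hfin (ENNReal.tsum_le_tsum fun y => ?_)
  by_cases hy : y ∈ A
  · simpa [Set.indicator_of_mem hy] using mul_le_mul_right (hF y hy) (p y)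
  · simp [Set.indicator_of_notMem hy]

theorem expVal_toReal (p : PMF α) {F : α → ℝ≥0∞} (hF : ∀ a, F a ≠ ∞) :
    expVal p (fun a => (F a).toReal) = (∑' a, p a * F a).toReal := by
  rw [expVal, ENNReal.tsum_toReal_eq fun a => ENNReal.mul_ne_top (PMF.apply_ne_top p a) (hF a)]
  simp only [ENNReal.toReal_mul]

end PMFExpectation

variable {n : ℕ}

theorem count_eq_sum (i : ℤ) (x : Fin n → ℤ) :
    count n i x = ∑ v, if x v = i then 1 else 0 :=
  card_filter _ _

theorem count_update_add (i : ℤ) (x : Fin n → ℤ) (v : Fin n) (c : ℤ) :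
    count n i (update x v c) + (if x v = i then 1 else 0) =
      count n i x + if c = i then 1 else 0 := by
  simp only [count_eq_sum]
  have hupd : ∀ u, (if update x v c u = i then 1 else 0) =
      update (fun u => if x u = i then 1 else 0) v (if c = i then 1 else 0) u :=
    fun u => apply_update (fun _ y => if y = i then 1 else 0) x v c u
  rw [Fintype.sum_congr _ _ hupd, sum_update_of_mem (mem_univ v),
    ← add_sum_erase univ _ (mem_univ v), sdiff_singleton_eq_erase]
  ring

theorem count_update_of_ne {i : ℤ} {x : Fin n → ℤ} {v : Fin n} {c : ℤ}
    (hx : x v ≠ i) (hc : c ≠ i) : count n i (update x v c) = count n i x := by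
  simpa [hx, hc] using count_update_add i x v c

theorem sum_count_le (x : Fin n → ℤ) (t : Finset ℤ) : ∑ i ∈ t, count n i x ≤ n := by
  simp only [count]
  rw [sum_card_fiberwise_eq_card_filter]
  exact (card_filter_le _ _).trans_eq (card_fin n)

def vote (x : Fin n → ℤ) (p : Fin n × Fin n) : Fin n → ℤ :=
  update x p.1 (updateRule (x p.1) (x p.2))

theorem abs_updateRule_sub_le (a b : ℤ) : |updateRule a b - a| ≤ 1 := by
  unfold updateRule; split_ifs <;> simp

theorem updateRule_mem_Icc {s ℓ a b : ℤ} (ha : a ∈ Set.Icc s ℓ) (hb : b ∈ Set.Icc s ℓ) :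
    updateRule a b ∈ Set.Icc s ℓ := by
  simp only [Set.mem_Icc] at *; unfold updateRule; split_ifs <;> omega

theorem updateRule_eq_of_le_iff {ℓ a b : ℤ} (ha : a ≤ ℓ) (hb : b ≤ ℓ) :
    updateRule a b = ℓ ↔ (a = ℓ - 1 ∨ a = ℓ) ∧ b = ℓ := by
  unfold updateRule; split_ifs <;> omega

theorem updateRule_eq_of_ge_iff {s a b : ℤ} (ha : s ≤ a) (hb : s ≤ b) :
    updateRule a b = s ↔ (a = s ∨ a = s + 1) ∧ b = s := by
  unfold updateRule; split_ifs <;> omega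

theorem sum_count_vote_add (i : ℤ) (x : Fin n → ℤ) :
    ∑ p, count n i (vote x p) + n * count n i x =
      n * n * count n i x +
        ∑ p : Fin n × Fin n, if updateRule (x p.1) (x p.2) = i then 1 else 0 := by
  have hfst : ∑ p : Fin n × Fin n, (if x p.1 = i then 1 else 0) = n * count n i x := by
    rw [Fintype.sum_prod_type' (fun v _ => if x v = i then 1 else 0), count_eq_sum, mul_sum]
    simp only [sum_const, card_univ, Fintype.card_fin, smul_eq_mul]
  calc ∑ p, count n i (vote x p) + n * count n i x
      = ∑ p : Fin n × Fin n, (count n i (vote x p) + if x p.1 = i then 1 else 0) := by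
        rw [sum_add_distrib, hfst]
    _ = ∑ p : Fin n × Fin n, (count n i x + if updateRule (x p.1) (x p.2) = i then 1 else 0) :=
        Fintype.sum_congr _ _ fun p => count_update_add i x p.1 _
    _ = _ := by simp [sum_add_distrib]

theorem sum_pairs_ite_eq_count_mul {x : Fin n → ℤ} {i j : ℤ} (hij : i ≠ j) :
    ∑ p : Fin n × Fin n, (if (x p.1 = i ∨ x p.1 = j) ∧ x p.2 = j then 1 else 0) =
      (count n i x + count n j x) * count n j x := by
  have hsplit : ∀ p : Fin n × Fin n,
      (if (x p.1 = i ∨ x p.1 = j) ∧ x p.2 = j then 1 else 0) =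
        ((if x p.1 = i then 1 else 0) + (if x p.1 = j then 1 else 0)) *
          (if x p.2 = j then 1 else 0) := by
    intro p; split_ifs <;> omega
  rw [Fintype.sum_congr _ _ hsplit, count_eq_sum, count_eq_sum, ← sum_add_distrib,
    Fintype.sum_mul_sum, Fintype.sum_prod_type]

theorem sum_ite_updateRule_eq_max {x : Fin n → ℤ} {ℓ : ℤ} (hx : ∀ v, x v ≤ ℓ) :
    ∑ p : Fin n × Fin n, (if updateRule (x p.1) (x p.2) = ℓ then 1 else 0) =
      (count n (ℓ - 1) x + count n ℓ x) * count n ℓ x := by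
  rw [← sum_pairs_ite_eq_count_mul (by omega)]
  exact Fintype.sum_congr _ _ fun p => by simp only [updateRule_eq_of_le_iff (hx _) (hx _)]

theorem sum_ite_updateRule_eq_min {x : Fin n → ℤ} {s : ℤ} (hx : ∀ v, s ≤ x v) :
    ∑ p : Fin n × Fin n, (if updateRule (x p.1) (x p.2) = s then 1 else 0) =
      (count n (s + 1) x + count n s x) * count n s x := by
  rw [← sum_pairs_ite_eq_count_mul (by omega)]
  exact Fintype.sum_congr _ _ fun p => by
    simp only [updateRule_eq_of_ge_iff (hx _) (hx _), or_comm]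

theorem count_mul_count_update_add {s ℓ : ℤ} (h3 : s + 3 ≤ ℓ) (x : Fin n → ℤ) (v : Fin n)
    {c : ℤ} (hc : |c - x v| ≤ 1) :
    count n s (update x v c) * count n ℓ (update x v c) + count n s x * count n ℓ x =
      count n s x * count n ℓ (update x v c) + count n ℓ x * count n s (update x v c) := by
  rw [abs_le] at hc
  rcases (by omega : (x v ≠ s ∧ c ≠ s) ∨ (x v ≠ ℓ ∧ c ≠ ℓ)) with ⟨hxs, hcs⟩ | ⟨hxℓ, hcℓ⟩
  · rw [count_update_of_ne hxs hcs]; ring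
  · rw [count_update_of_ne hxℓ hcℓ]; ring

theorem sum_count_mul_count_vote_add_le {s ℓ : ℤ} (h3 : s + 3 ≤ ℓ) {x : Fin n → ℤ}
    (hx : ∀ v, x v ∈ Set.Icc s ℓ) :
    ∑ p, count n s (vote x p) * count n ℓ (vote x p) + n * (count n s x * count n ℓ x) ≤
      n * n * (count n s x * count n ℓ x) := by
  have hprod := Fintype.sum_congr _ _ fun p : Fin n × Fin n =>
    count_mul_count_update_add h3 x p.1 (abs_updateRule_sub_le (x p.1) (x p.2))
  simp only [sum_add_distrib, ← mul_sum, sum_const, card_univ, Fintype.card_prod,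
    Fintype.card_fin, smul_eq_mul] at hprod
  have hℓ := sum_count_vote_add ℓ x
  have hs := sum_count_vote_add s x
  rw [sum_ite_updateRule_eq_max fun v => (hx v).2] at hℓ
  rw [sum_ite_updateRule_eq_min fun v => (hx v).1] at hs
  have hfour := sum_count_le x {s, s + 1, ℓ - 1, ℓ}
  rw [sum_insert (by simp; omega), sum_insert (by simp; omega), sum_pair (by omega)] at hfour
  simp only [vote] at hs hℓ ⊢
  nlinarith [Nat.mul_le_mul_left (count n s x * count n ℓ x) hfour]

theorem count_le (i : ℤ) (x : Fin n → ℤ) : count n i x ≤ n := by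
  simpa using sum_count_le x {i}

theorem vote_mem_Icc {s ℓ : ℤ} {x : Fin n → ℤ} (hx : ∀ v, x v ∈ Set.Icc s ℓ)
    (p : Fin n × Fin n) : ∀ v, vote x p v ∈ Set.Icc s ℓ :=
  forall_update_iff x (p := fun _ y => y ∈ Set.Icc s ℓ) |>.mpr
    ⟨updateRule_mem_Icc (hx _) (hx _), fun v _ => hx v⟩

theorem one_sub_one_div_natCast_nonneg : 0 ≤ 1 - 1 / (n : ℝ) :=
  sub_nonneg.2 (by simpa using Nat.cast_inv_le_one n)

variable [NeZero n]

theorem tsum_step_mul (x : Fin n → ℤ) (G : (Fin n → ℤ) → ℝ≥0∞) :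
    ∑' y, step n x y * G y = ((n : ℝ≥0∞) * n)⁻¹ * ∑ p, G (vote x p) := by
  rw [step, tsum_map_mul, tsum_fintype, mul_sum]
  simp [PMF.uniformOfFintype_apply, vote]

theorem tsum_step_mul_count_le {s ℓ : ℤ} (h3 : s + 3 ≤ ℓ) {x : Fin n → ℤ}
    (hx : ∀ v, x v ∈ Set.Icc s ℓ) :
    ∑' y, step n x y * ((count n s y * count n ℓ y : ℕ) : ℝ≥0∞) ≤
      ENNReal.ofReal (1 - 1 / n) * ((count n s x * count n ℓ x : ℕ) : ℝ≥0∞) := by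
  have hn : (0 : ℝ) < n := by exact_mod_cast Nat.pos_of_neZero n
  set m := count n s x * count n ℓ x
  set S := ∑ p, count n s (vote x p) * count n ℓ (vote x p)
  have hnat : (S : ℝ) + n * m ≤ n * n * m := by
    exact_mod_cast sum_count_mul_count_vote_add_le h3 hx
  have hmean : ((n : ℝ≥0∞) * n)⁻¹ *
      ∑ p, ((count n s (vote x p) * count n ℓ (vote x p) : ℕ) : ℝ≥0∞) =
        ENNReal.ofReal (S / (n * n)) := by
    rw [ENNReal.ofReal_div_of_pos (by positivity), ENNReal.ofReal_mul hn.le,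
      ENNReal.ofReal_natCast, ENNReal.ofReal_natCast, ENNReal.div_eq_inv_mul, ← Nat.cast_sum]
  rw [tsum_step_mul, hmean, ← ENNReal.ofReal_natCast m,
    ← ENNReal.ofReal_mul one_sub_one_div_natCast_nonneg]
  refine ENNReal.ofReal_le_ofReal ?_
  rw [div_le_iff₀ (by positivity)]
  have : (1 - 1 / n) * m * (n * n) = n * n * m - n * (m : ℝ) := by field_simp
  linarith

theorem expVal_step_count_mul_le {s ℓ : ℤ} (h3 : s + 3 ≤ ℓ) {x : Fin n → ℤ}
    (hx : ∀ v, x v ∈ Set.Icc s ℓ) :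
    expVal (step n x) (fun y => (count n s y : ℝ) * count n ℓ y) ≤
      (1 - 1 / n) * (count n s x * count n ℓ x) := by
  have hF : ∀ y : Fin n → ℤ, (count n s y : ℝ) * count n ℓ y =
      ((count n s y * count n ℓ y : ℕ) : ℝ≥0∞).toReal := by simp
  simp_rw [hF]
  rw [expVal_toReal _ fun y => ENNReal.natCast_ne_top _,
    ← ENNReal.toReal_ofReal one_sub_one_div_natCast_nonneg, ← ENNReal.toReal_mul]
  exact ENNReal.toReal_mono (ENNReal.mul_ne_top ENNReal.ofReal_ne_top (ENNReal.natCast_ne_top _))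
    (tsum_step_mul_count_le h3 hx)

theorem support_dist_subset {S : Set (Fin n → ℤ)} (hS : ∀ x ∈ S, ∀ p, vote x p ∈ S)
    {x0 : Fin n → ℤ} (h0 : x0 ∈ S) (t : ℕ) : (dist n x0 t).support ⊆ S := by
  induction t with
  | zero => simpa [dist] using h0
  | succ t ih =>
    intro y hy
    rw [dist, PMF.support_bind, Set.mem_iUnion₂] at hy
    obtain ⟨x, hx, hy⟩ := hy
    rw [step, PMF.support_map] at hy
    obtain ⟨p, -, rfl⟩ := hy
    exact hS x (ih hx) p

theorem tsum_dist_mul_le {S : Set (Fin n → ℤ)} (hS : ∀ x ∈ S, ∀ p, vote x p ∈ S)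
    {x0 : Fin n → ℤ} (h0 : x0 ∈ S) {F : (Fin n → ℤ) → ℝ≥0∞} {c : ℝ≥0∞}
    (hF : ∀ x ∈ S, ∑' y, step n x y * F y ≤ c * F x) (t : ℕ) :
    ∑' y, dist n x0 t y * F y ≤ c ^ t * F x0 := by
  induction t with
  | zero =>
    rw [dist, tsum_eq_single x0 fun y hy => by simp [PMF.pure_apply, hy]]
    simp
  | succ t ih =>
    calc ∑' y, dist n x0 (t + 1) y * F y ≤ c * ∑' x, dist n x0 t x * F x :=
          tsum_bind_mul_le fun x hx => hF x (support_dist_subset hS h0 t hx)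
      _ ≤ c * (c ^ t * F x0) := by gcongr
      _ = c ^ (t + 1) * F x0 := by ring

theorem one_sub_inv_pow_mul_sq_le {x : ℝ} (hx : 1 ≤ x) :
    (1 - 1 / x) ^ ⌈3 * x * Real.log x⌉₊ * (x * x) ≤ 1 / x := by
  set T := ⌈3 * x * Real.log x⌉₊
  have hx0 : 0 < x := one_pos.trans_le hx
  have hbase : 0 ≤ 1 - 1 / x := by rw [sub_nonneg, div_le_one hx0]; exact hx
  have hpow : (1 - 1 / x) ^ T ≤ (x ^ 3)⁻¹ :=
    calc (1 - 1 / x) ^ T ≤ Real.exp (-(1 / x)) ^ T := by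
          gcongr; linarith [Real.add_one_le_exp (-(1 / x))]
      _ = Real.exp (-(T / x)) := by rw [← Real.exp_nat_mul]; ring_nf
      _ ≤ Real.exp (-Real.log (x ^ 3)) := by
          gcongr
          rw [Real.log_pow, le_div_iff₀ hx0]
          push_cast
          linarith [Nat.le_ceil (3 * x * Real.log x)]
      _ = (x ^ 3)⁻¹ := by rw [Real.exp_neg, Real.exp_log (by positivity)]
  calc (1 - 1 / x) ^ T * (x * x) ≤ (x ^ 3)⁻¹ * (x * x) := by gcongr
    _ = 1 / x := by field_simp

theorem prob_dist_count_mul_pos_le {s ℓ : ℤ} (h3 : s + 3 ≤ ℓ) {x0 : Fin n → ℤ}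
    (h0 : ∀ v, x0 v ∈ Set.Icc s ℓ) (t : ℕ) :
    prob (dist n x0 t) {y | 0 < count n s y * count n ℓ y} ≤ (1 - 1 / n) ^ t * (n * n) := by
  set F : (Fin n → ℤ) → ℝ≥0∞ := fun y => (count n s y * count n ℓ y : ℕ)
  have hE := tsum_dist_mul_le (S := {x | ∀ v, x v ∈ Set.Icc s ℓ})
    (fun x hx p => vote_mem_Icc hx p) h0 (fun x hx => tsum_step_mul_count_le h3 hx) t
  have hfin : ENNReal.ofReal (1 - 1 / n) ^ t * F x0 ≠ ⊤ :=
    ENNReal.mul_ne_top (ENNReal.pow_ne_top ENNReal.ofReal_ne_top) (ENNReal.natCast_ne_top _)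
  calc prob (dist n x0 t) {y | 0 < count n s y * count n ℓ y}
      ≤ (∑' y, dist n x0 t y * F y).toReal :=
        prob_le_toReal_tsum_mul _ (fun y hy => Nat.one_le_cast.mpr hy)
          (ne_top_of_le_ne_top hfin hE)
    _ ≤ (ENNReal.ofReal (1 - 1 / n) ^ t * F x0).toReal := ENNReal.toReal_mono hfin hE
    _ = (1 - 1 / n) ^ t * (count n s x0 * count n ℓ x0) := by
        rw [ENNReal.toReal_mul, ENNReal.toReal_pow,
          ENNReal.toReal_ofReal one_sub_one_div_natCast_nonneg]
        simp [F]
    _ ≤ (1 - 1 / n) ^ t * (n * n) := by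
        have := one_sub_one_div_natCast_nonneg (n := n)
        gcongr <;> exact_mod_cast count_le _ _

/-- **Elimination of an extreme opinion for asynchronous incremental voting on `K_n`**:
if `ℓ ≥ s + 3`, then `E[N_s(t+1)·N_ℓ(t+1) | X(t)] ≤ (1 − 1/n)·N_s(t)·N_ℓ(t)`, and for
`T = ⌈3 n log n⌉` we have `P[N_s(T)·N_ℓ(T) > 0] ≤ 1/n`. -/
theorem extreme_opinion_elimination_async
    (n : ℕ) [NeZero n] (x0 : Fin n → ℤ) (s ℓ : ℤ)
    (hs : IsLeast (Set.range x0) s) (hℓ : IsGreatest (Set.range x0) ℓ)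
    (h3 : s + 3 ≤ ℓ) :
    (∀ x : Fin n → ℤ, (∀ v, s ≤ x v ∧ x v ≤ ℓ) →
      expVal (step n x) (fun y => (count n s y : ℝ) * (count n ℓ y : ℝ)) ≤
        (1 - 1 / (n : ℝ)) * ((count n s x : ℝ) * (count n ℓ x : ℝ))) ∧
    prob (dist n x0 ⌈3 * n * Real.log n⌉₊) {y | 0 < count n s y * count n ℓ y} ≤
      1 / n := by
  have h0 : ∀ v, x0 v ∈ Set.Icc s ℓ := fun v => ⟨hs.2 ⟨v, rfl⟩, hℓ.2 ⟨v, rfl⟩⟩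
  refine ⟨fun x hx => expVal_step_count_mul_le h3 hx, ?_⟩
  calc prob (dist n x0 ⌈3 * n * Real.log n⌉₊) {y | 0 < count n s y * count n ℓ y}
      ≤ (1 - 1 / n) ^ ⌈3 * n * Real.log n⌉₊ * (n * n) := prob_dist_count_mul_pos_le h3 h0 _
    _ ≤ 1 / n := one_sub_inv_pow_mul_sq_le (by exact_mod_cast NeZero.one_le)

end KnAsync14
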